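/- The span in ℂ⁴⊗ℂ⁴ of the 12 tensors (e₁−e₂)⊗(e₃−e₄), (e₁−e₃)⊗(e₂−e₄), (e₁−e₄)⊗(e₂−e₃), (e₂−e₃)⊗(e₁−e₄), (e₂−e₄)⊗(e₁−e₃), (e₃−e₄)⊗(e₁−e₂), (e₁+e₂)⊗(e₃+e₄), (e₁+e₃)⊗(e₂+e₄), (e₁+e₄)⊗(e₂+e₃), (e₂+e₃)⊗(e₁+e₄), (e₂+e₄)⊗(e₁+e₃), (e₃+e₄)⊗(e₁+e₂) has dimension exactly 9. -/
import Mathlib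


/-- Coordinates of `e_a + e_b` in `ℂ⁴`. -/
def eP (a b : Fin 4) : Fin 4 → ℂ := fun i =>
  (if i = a then 1 else 0) + (if i = b then 1 else 0)

/-- Coordinates of `e_a − e_b` in `ℂ⁴`. -/
def eM (a b : Fin 4) : Fin 4 → ℂ := fun i =>
  (if i = a then 1 else 0) - (if i = b then 1 else 0)

/-- The twelve rank-one tensors `(e_a ± e_b)⊗(e_c ± e_d)` in `ℂ⁴⊗ℂ⁴`. -/
def twelveTensors : Fin 12 → (Fin 4 → Fin 4 → ℂ) :=
  ![fun i j => eM 0 1 i * eM 2 3 j,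
    fun i j => eM 0 2 i * eM 1 3 j,
    fun i j => eM 0 3 i * eM 1 2 j,
    fun i j => eM 1 2 i * eM 0 3 j,
    fun i j => eM 1 3 i * eM 0 2 j,
    fun i j => eM 2 3 i * eM 0 1 j,
    fun i j => eP 0 1 i * eP 2 3 j,
    fun i j => eP 0 2 i * eP 1 3 j,
    fun i j => eP 0 3 i * eP 1 2 j,
    fun i j => eP 1 2 i * eP 0 3 j,
    fun i j => eP 1 3 i * eP 0 2 j,
    fun i j => eP 2 3 i * eP 0 1 j]

open Matrix in
@[simp] lemma cons_val_five' {α : Type*} {m : ℕ} (x : α) (u : Fin (m+5) → α) :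
    vecCons x u 5 = vecHead (vecTail (vecTail (vecTail (vecTail u)))) := rfl
open Matrix in
@[simp] lemma cons_val_six' {α : Type*} {m : ℕ} (x : α) (u : Fin (m+6) → α) :
    vecCons x u 6 = vecHead (vecTail (vecTail (vecTail (vecTail (vecTail u))))) := rfl
open Matrix in
@[simp] lemma cons_val_seven' {α : Type*} {m : ℕ} (x : α) (u : Fin (m+7) → α) :
    vecCons x u 7 =
      vecHead (vecTail (vecTail (vecTail (vecTail (vecTail (vecTail u)))))) := rfl
open Matrix in
@[simp] lemma cons_val_eight' {α : Type*} {m : ℕ} (x : α) (u : Fin (m+8) → α) :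
    vecCons x u 8 =
      vecHead (vecTail (vecTail (vecTail (vecTail (vecTail (vecTail (vecTail u))))))) := rfl
open Matrix in
@[simp] lemma cons_val_nine' {α : Type*} {m : ℕ} (x : α) (u : Fin (m+9) → α) :
    vecCons x u 9 =
      vecHead (vecTail (vecTail (vecTail (vecTail (vecTail (vecTail (vecTail (vecTail u))))))))
  := rfl

/-- The nine chosen indices. -/
def selIdx : Fin 9 → Fin 12 := ![0, 1, 2, 3, 4, 6, 7, 8, 9]

/-- The nine chosen tensors. -/
def nineT : Fin 9 → (Fin 4 → Fin 4 → ℂ) := twelveTensors ∘ selIdx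

/-- The nine chosen coordinate positions. -/
def coords : Fin 9 → Fin 4 × Fin 4 :=
  ![(0,1), (0,2), (0,3), (1,0), (1,2), (1,3), (2,0), (2,1), (2,3)]

/-- Coordinate-extraction linear map. -/
def Lmap : (Fin 4 → Fin 4 → ℂ) →ₗ[ℂ] (Fin 9 → ℂ) where
  toFun f := fun k => f (coords k).1 (coords k).2
  map_add' _ _ := rfl
  map_smul' _ _ := rfl

noncomputable def Mmat : Matrix (Fin 9) (Fin 9) ℂ :=
  !![0, 1, (-1), 0, (-1), 1, 0, 0, 0;
     1, 0, (-1), 0, 0, 0, 0, (-1), 1;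
     1, (-1), 0, 0, 0, 0, 0, 0, 0;
     0, 0, 0, 1, 0, (-1), (-1), 0, 1;
     0, 0, 0, 1, (-1), 0, 0, 0, 0;
     0, 1, 1, 0, 1, 1, 0, 0, 0;
     1, 0, 1, 0, 0, 0, 0, 1, 1;
     1, 1, 0, 0, 0, 0, 0, 0, 0;
     0, 0, 0, 1, 0, 1, 1, 0, 1]

noncomputable def Nmat : Matrix (Fin 9) (Fin 9) ℂ :=
  !![0, 0, (1/2), 0, 0, 0, 0, (1/2), 0;
     0, 0, (-1/2), 0, 0, 0, 0, (1/2), 0;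
     (-1/2), (1/2), (-1/2), (-1/2), 1, (1/2), (1/2), (-1/2), (-1/2);
     0, (-1/2), (1/2), (1/2), 0, 0, (-1/2), (1/2), (1/2);
     0, (-1/2), (1/2), (1/2), (-1), 0, (-1/2), (1/2), (1/2);
     (1/2), 0, (1/2), 0, 0, (1/2), 0, (-1/2), 0;
     (-1/2), 0, (-1/2), (-1/2), 0, (-1/2), 0, (1/2), (1/2);
     (1/2), (-1), (1/2), (1/2), (-1), (-1/2), 0, (1/2), (1/2);
     0, (1/2), (-1/2), 0, 0, 0, (1/2), (-1/2), 0]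

set_option maxHeartbeats 2000000 in
lemma MN : Mmat * Nmat = 1 := by
  ext i j
  fin_cases i <;> fin_cases j <;>
    simp [Mmat, Nmat, Matrix.mul_apply, Fin.sum_univ_succ, Matrix.one_apply] <;> norm_num

lemma t0 : twelveTensors 0 = fun i j => eM 0 1 i * eM 2 3 j := rfl
lemma t1 : twelveTensors 1 = fun i j => eM 0 2 i * eM 1 3 j := rfl
lemma t2 : twelveTensors 2 = fun i j => eM 0 3 i * eM 1 2 j := rfl
lemma t3 : twelveTensors 3 = fun i j => eM 1 2 i * eM 0 3 j := rfl
lemma t4 : twelveTensors 4 = fun i j => eM 1 3 i * eM 0 2 j := rfl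
lemma t5 : twelveTensors 5 = fun i j => eM 2 3 i * eM 0 1 j := rfl
lemma t6 : twelveTensors 6 = fun i j => eP 0 1 i * eP 2 3 j := rfl
lemma t7 : twelveTensors 7 = fun i j => eP 0 2 i * eP 1 3 j := rfl
lemma t8 : twelveTensors 8 = fun i j => eP 0 3 i * eP 1 2 j := rfl
lemma t9 : twelveTensors 9 = fun i j => eP 1 2 i * eP 0 3 j := rfl
lemma t10 : twelveTensors 10 = fun i j => eP 1 3 i * eP 0 2 j := rfl
lemma t11 : twelveTensors 11 = fun i j => eP 2 3 i * eP 0 1 j := rfl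

set_option maxHeartbeats 2000000 in
lemma Lcomp : (⇑Lmap ∘ nineT) = fun k => Mmat k := by
  funext k m
  fin_cases k <;> fin_cases m <;>
    simp [Lmap, nineT, selIdx, coords, Mmat, t0, t1, t2, t3, t4, t6, t7, t8, t9,
      eM, eP, Function.comp, Matrix.vecHead, Matrix.vecTail] <;> norm_num

lemma nineT_li : LinearIndependent ℂ nineT := by
  have h : LinearIndependent ℂ (fun k => Mmat k) :=
    Matrix.linearIndependent_rows_iff_isUnit.2
      (@isUnit_of_invertible _ _ _ (invertibleOfRightInverse _ _ MN))
  rw [← Lcomp] at h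
  exact h.of_comp Lmap

set_option maxHeartbeats 2000000 in
lemma span_eq : Submodule.span ℂ (Set.range twelveTensors)
    = Submodule.span ℂ (Set.range nineT) := by
  apply le_antisymm
  · rw [Submodule.span_le]
    have mem : ∀ k : Fin 9, twelveTensors (selIdx k) ∈
        Submodule.span ℂ (Set.range nineT) := fun k =>
      Submodule.subset_span ⟨k, rfl⟩
    rintro _ ⟨i, rfl⟩
    fin_cases i
    · exact mem 0
    · exact mem 1
    · exact mem 2
    · exact mem 3
    · exact mem 4
    · have h : twelveTensors 5 = -(twelveTensors 0) + twelveTensors 1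
          - twelveTensors 2 - twelveTensors 3 + twelveTensors 4 := by
        rw [t0, t1, t2, t3, t4, t5]
        funext i j
        fin_cases i <;> fin_cases j <;> simp [eM, eP] <;> ring
      show twelveTensors 5 ∈ _
      rw [h]
      exact add_mem (sub_mem (sub_mem (add_mem (neg_mem (mem 0)) (mem 1)) (mem 2)) (mem 3))
        (mem 4)
    · exact mem 5
    · exact mem 6
    · exact mem 7
    · exact mem 8
    · have h : twelveTensors 10 = -(twelveTensors 1) + twelveTensors 2 + twelveTensors 3
          - twelveTensors 4 - twelveTensors 7 + twelveTensors 8 + twelveTensors 9 := by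
        rw [t1, t2, t3, t4, t7, t8, t9, t10]
        funext i j
        fin_cases i <;> fin_cases j <;> simp [eM, eP] <;> ring
      show twelveTensors 10 ∈ _
      rw [h]
      exact add_mem (add_mem (sub_mem (sub_mem (add_mem (add_mem (neg_mem (mem 1)) (mem 2))
        (mem 3)) (mem 4)) (mem 6)) (mem 7)) (mem 8)
    · have h : twelveTensors 11 = -(twelveTensors 1) - twelveTensors 4 - twelveTensors 6
          + twelveTensors 8 + twelveTensors 9 := by
        rw [t1, t4, t6, t8, t9, t11]
        funext i j
        fin_cases i <;> fin_cases j <;> simp [eM, eP] <;> ring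
      show twelveTensors 11 ∈ _
      rw [h]
      exact add_mem (add_mem (sub_mem (sub_mem (neg_mem (mem 1)) (mem 4)) (mem 5)) (mem 7))
        (mem 8)
  · apply Submodule.span_mono
    rintro _ ⟨k, rfl⟩
    exact ⟨selIdx k, rfl⟩

/-- The span of the twelve listed rank-one tensors in `ℂ⁴⊗ℂ⁴` has dimension exactly `9`. -/
theorem twelveTensors_span_dim_nine :
    Module.finrank ℂ (Submodule.span ℂ (Set.range twelveTensors)) = 9 := by
  rw [span_eq, finrank_span_eq_card nineT_li]
  simp
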